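/- There is a universal constant C > 0 such that for every finitely supported function φ : ℍ → H into a Hilbert space H: ∑_{x ∈ ℍ} ∑_{k=1}^{∞} ‖φ(xc^k) − φ(x)‖² / k² ≤ C · ∑_{x ∈ ℍ} ( ‖φ(xa) − φ(x)‖² + ‖φ(xb) − φ(x)‖² ), where c = aba⁻¹b⁻¹. -/

import Mathlib

open scoped BigOperators

/-- The discrete Heisenberg group `ℍ`, realized via the coordinates of the
3×3 upper-triangular integer matrices `[[1, x, z], [0, 1, y], [0, 0, 1]]`
with unit diagonal. -/
@[ext] structure Heis where
  x : ℤ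
  y : ℤ
  z : ℤ

namespace Heis

instance : One Heis := ⟨⟨0, 0, 0⟩⟩
instance : Mul Heis := ⟨fun g h => ⟨g.x + h.x, g.y + h.y, g.z + h.z + g.x * h.y⟩⟩
instance : Inv Heis := ⟨fun g => ⟨-g.x, -g.y, -g.z + g.x * g.y⟩⟩

@[simp] lemma mul_def (g h : Heis) :
    g * h = ⟨g.x + h.x, g.y + h.y, g.z + h.z + g.x * h.y⟩ := rfl
@[simp] lemma one_def : (1 : Heis) = ⟨0, 0, 0⟩ := rfl
@[simp] lemma inv_def (g : Heis) : g⁻¹ = ⟨-g.x, -g.y, -g.z + g.x * g.y⟩ := rfl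

instance : Group Heis where
  mul_assoc g h k := by ext <;> simp <;> ring
  one_mul g := by ext <;> simp
  mul_one g := by ext <;> simp
  inv_mul_cancel g := by ext <;> simp <;> ring

/-- The generator `a`. -/
def A : Heis := ⟨1, 0, 0⟩
/-- The generator `b`. -/
def B : Heis := ⟨0, 1, 0⟩
/-- The commutator `c = a * b * a⁻¹ * b⁻¹`, a central element. -/
def C : Heis := A * B * A⁻¹ * B⁻¹
/-- The symmetric generating set `S = {a, b, a⁻¹, b⁻¹}`. -/
def S : Set Heis := {A, B, A⁻¹, B⁻¹}

/-- The word length of `g` with respect to the generating set `S`. -/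
noncomputable def wordLength (g : Heis) : ℕ :=
  sInf {n : ℕ | ∃ l : List Heis, l.length = n ∧ (∀ s ∈ l, s ∈ S) ∧ l.prod = g}

/-- The left-invariant word metric `d_W` on `ℍ` associated to `S`. -/
noncomputable def dW (g h : Heis) : ℕ := wordLength (g⁻¹ * h)

end Heis

/-!
Fourier-transform `φ` in the central coordinate. Right multiplication by `c ^ k` becomes
multiplication by `ω ^ k` for a unimodular frequency `ω`, while right multiplication by `a` and
by `b` become isometries `U`, `V` of `ℓ²` of the plane obeying the Weyl relation `U V = ω V U`.
Pairing `(U V - V U) f = ((U - 1)(V - 1) - (V - 1)(U - 1)) f` with `f` gives an uncertainty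
principle: `|ω - 1| ‖f‖² ≤ 16 (‖U f - f‖² + ‖V f - f‖²)`. On the other side
`|ω ^ k - 1| ≤ min (k |ω - 1|) 2`, so `∑ₖ |ω ^ k - 1|² / k² ≤ 9 |ω - 1|`. Parseval over the
frequencies then gives the inequality with `C = 144`.

To have a finite Fourier transform, `φ` is first periodized to the Heisenberg group over `ZMod N`,
with `N` so large that reduction mod `N` is injective on all the supports involved; and `H` is
replaced by a complex Euclidean space holding a congruent copy of the finitely many values.
-/

open Finset Function
open scoped InnerProductSpace

section Uncertainty

variable {E : Type*} [NormedAddCommGroup E] [InnerProductSpace ℂ E]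

lemma norm_inner_map_sub_le (U : E →ₗᵢ[ℂ] E) (f x : E) :
    ‖⟪f, U x - x⟫_ℂ‖ ≤ ‖U f - f‖ * ‖x‖ := by
  have h : ⟪f, U x - x⟫_ℂ = ⟪f - U f, U x⟫_ℂ := by
    rw [inner_sub_right, inner_sub_left, U.inner_map_map]
  rw [h, norm_sub_rev, ← U.norm_map x]
  exact norm_inner_le_norm _ _

lemma norm_sub_one_mul_norm_inner_le (U V : E →ₗᵢ[ℂ] E) (c : ℂ) (f : E)
    (hUV : U (V f) = c • V (U f)) :
    ‖c - 1‖ * ‖⟪f, V (U f)⟫_ℂ‖ ≤ 2 * ‖U f - f‖ * ‖V f - f‖ := by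
  have hcomm : (c - 1) • V (U f) =
      (U (V f - f) - (V f - f)) - (V (U f - f) - (U f - f)) := by
    rw [sub_smul, one_smul, ← hUV, map_sub, map_sub]; abel
  rw [← norm_mul, ← inner_smul_right, hcomm, inner_sub_right]
  calc _ ≤ _ := norm_sub_le _ _
    _ ≤ ‖U f - f‖ * ‖V f - f‖ + ‖V f - f‖ * ‖U f - f‖ :=
      add_le_add (norm_inner_map_sub_le U f _) (norm_inner_map_sub_le V f _)
    _ = _ := by ring

lemma norm_eq_one_of_map_map_eq_smul (U V : E →ₗᵢ[ℂ] E) {c : ℂ} {f : E}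
    (hUV : U (V f) = c • V (U f)) (hf : f ≠ 0) : ‖c‖ = 1 := by
  have h : ‖c‖ * ‖f‖ = 1 * ‖f‖ := by
    simpa [norm_smul, eq_comm] using congrArg norm hUV
  exact mul_right_cancel₀ (norm_ne_zero_iff.2 hf) h

theorem norm_sub_one_mul_norm_sq_le (U V : E →ₗᵢ[ℂ] E) (c : ℂ) (f : E)
    (hUV : U (V f) = c • V (U f)) :
    ‖c - 1‖ * ‖f‖ ^ 2 ≤ 16 * (‖U f - f‖ ^ 2 + ‖V f - f‖ ^ 2) := by
  rcases eq_or_ne f 0 with rfl | hf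
  · simp
  set a := ‖U f - f‖
  set b := ‖V f - f‖
  set t := ‖f‖
  have hc : ‖c - 1‖ ≤ 2 := by
    linarith [norm_sub_le c 1, norm_one (α := ℂ), norm_eq_one_of_map_map_eq_smul U V hUV hf]
  have hclose : ‖V (U f) - f‖ ≤ a + b := by
    calc ‖V (U f) - f‖ = ‖V (U f - f) + (V f - f)‖ := by rw [map_sub]; abel_nf
      _ ≤ ‖V (U f - f)‖ + ‖V f - f‖ := norm_add_le _ _
      _ = a + b := by rw [V.norm_map]
  have hlower : t ^ 2 - t * (a + b) ≤ ‖⟪f, V (U f)⟫_ℂ‖ := by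
    have e : (t : ℂ) ^ 2 = ⟪f, V (U f)⟫_ℂ - ⟪f, V (U f) - f⟫_ℂ := by
      rw [inner_sub_right, inner_self_eq_norm_sq_to_K, sub_sub_cancel]; rfl
    have h1 : t ^ 2 ≤ ‖⟪f, V (U f)⟫_ℂ‖ + ‖⟪f, V (U f) - f⟫_ℂ‖ := by
      simpa [e] using norm_sub_le ⟪f, V (U f)⟫_ℂ ⟪f, V (U f) - f⟫_ℂ
    have h2 := (norm_inner_le_norm (𝕜 := ℂ) f (V (U f) - f)).trans
      (mul_le_mul_of_nonneg_left hclose (norm_nonneg f))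
    linarith
  have ht : 0 ≤ t := norm_nonneg _
  have hd : 0 ≤ ‖c - 1‖ := norm_nonneg _
  have key : ‖c - 1‖ * (t ^ 2 - t * (a + b)) ≤ 2 * a * b :=
    (mul_le_mul_of_nonneg_left hlower hd).trans (norm_sub_one_mul_norm_inner_le U V c f hUV)
  rcases le_or_gt t (2 * (a + b)) with hsmall | hbig
  · have : t ^ 2 ≤ (2 * (a + b)) ^ 2 := pow_le_pow_left₀ ht hsmall 2
    nlinarith [sq_nonneg (a - b), mul_le_mul_of_nonneg_right hc (sq_nonneg t)]
  · nlinarith [sq_nonneg (a - b), mul_le_mul_of_nonneg_left hbig.le (mul_nonneg hd ht)]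

end Uncertainty

lemma norm_pow_sub_one_le {ω : ℂ} (hω : ‖ω‖ ≤ 1) (m : ℕ) : ‖ω ^ m - 1‖ ≤ m * ‖ω - 1‖ := by
  induction m with
  | zero => simp
  | succ m ih =>
    calc ‖ω ^ (m + 1) - 1‖ = ‖ω * (ω ^ m - 1) + (ω - 1)‖ := by ring_nf
      _ ≤ ‖ω‖ * ‖ω ^ m - 1‖ + ‖ω - 1‖ := by rw [← norm_mul]; exact norm_add_le _ _
      _ ≤ 1 * (m * ‖ω - 1‖) + ‖ω - 1‖ := by gcongr
      _ = (m + 1 : ℕ) * ‖ω - 1‖ := by push_cast; ring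

lemma norm_pow_sub_one_le_two {ω : ℂ} (hω : ‖ω‖ ≤ 1) (m : ℕ) : ‖ω ^ m - 1‖ ≤ 2 := by
  calc ‖ω ^ m - 1‖ ≤ ‖ω‖ ^ m + ‖(1 : ℂ)‖ := by rw [← norm_pow]; exact norm_sub_le _ _
    _ ≤ 1 + 1 := by rw [norm_one]; gcongr; exact pow_le_one₀ (norm_nonneg ω) hω
    _ = 2 := by norm_num

lemma norm_pow_succ_sub_one_sq_div_le {ω : ℂ} (hω : ‖ω‖ ≤ 1) (hd : 0 < ‖ω - 1‖) (n : ℕ) :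
    ‖ω ^ (n + 1) - 1‖ ^ 2 / ((n : ℝ) + 1) ^ 2 ≤
      9 * (1 / (n + ‖ω - 1‖⁻¹) - 1 / ((n + 1 : ℕ) + ‖ω - 1‖⁻¹)) := by
  set u := ‖ω - 1‖⁻¹
  set x := ‖ω ^ (n + 1) - 1‖
  have hu : 0 < u := inv_pos.2 hd
  have hx0 : 0 ≤ x := norm_nonneg _
  have hx1 : x ≤ (n + 1) * ‖ω - 1‖ := by exact_mod_cast norm_pow_sub_one_le hω (n + 1)
  have hx2 : x ≤ 2 := norm_pow_sub_one_le_two hω (n + 1)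
  have hn : (0 : ℝ) ≤ n := n.cast_nonneg
  have hxu : x * u ≤ n + 1 := by
    calc x * u ≤ (n + 1) * ‖ω - 1‖ * u := by gcongr
      _ = n + 1 := by rw [mul_assoc, mul_inv_cancel₀ hd.ne', mul_one]
  have hA : x * ((n + 1) + u) ≤ 3 * (n + 1) := by nlinarith
  have hB : x * (n + u) ≤ 3 * (n + 1) := by nlinarith
  have hprod : x ^ 2 * ((n + u) * ((n + 1) + u)) ≤ 9 * (n + 1) ^ 2 := by
    nlinarith [mul_le_mul hA hB (by positivity) (by positivity)]
  push_cast
  rw [div_sub_div _ _ (by positivity) (by positivity), div_le_iff₀ (by positivity)]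
  calc x ^ 2 = x ^ 2 * ((n + u) * ((n + 1) + u)) / ((n + u) * ((n + 1) + u)) := by
        field_simp
    _ ≤ 9 * (n + 1) ^ 2 / ((n + u) * ((n + 1) + u)) := by gcongr
    _ = _ := by field_simp; ring

theorem sum_norm_pow_sub_one_sq_div_le {ω : ℂ} (hω : ‖ω‖ ≤ 1) (K : ℕ) :
    ∑ n ∈ range K, ‖ω ^ (n + 1) - 1‖ ^ 2 / ((n : ℝ) + 1) ^ 2 ≤ 9 * ‖ω - 1‖ := by
  rcases (norm_nonneg (ω - 1)).eq_or_lt with hd | hd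
  · refine (sum_nonpos fun n _ => ?_).trans (mul_nonneg (by norm_num) (norm_nonneg _))
    have := norm_pow_sub_one_le hω (n + 1)
    rw [← hd, mul_zero] at this
    rw [norm_le_zero_iff.1 this]; simp
  set u := ‖ω - 1‖⁻¹
  calc _ ≤ ∑ n ∈ range K, 9 * (1 / (n + u) - 1 / ((n + 1 : ℕ) + u)) :=
        sum_le_sum fun n _ => norm_pow_succ_sub_one_sq_div_le hω hd n
    _ = 9 * (1 / ((0 : ℕ) + u) - 1 / (K + u)) := by
      rw [← mul_sum, sum_range_sub' (fun i : ℕ => 1 / ((i : ℝ) + u))]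
    _ ≤ 9 * ‖ω - 1‖ := by
      have : 0 ≤ 1 / (K + u) := by positivity
      simp only [Nat.cast_zero, zero_add, one_div, u, inv_inv] at this ⊢
      linarith

section Fourier

variable {V : Type*} [NormedAddCommGroup V] [InnerProductSpace ℂ V]

theorem sum_norm_sq_sum_addChar_smul {G : Type*} [AddCommGroup G] [Fintype G] (f : G → V) :
    ∑ χ : AddChar G ℂ, ‖∑ z, χ z • f z‖ ^ 2 = Fintype.card G * ∑ z, ‖f z‖ ^ 2 := by
  classical
  have key : ∑ χ : AddChar G ℂ, ⟪∑ z, χ z • f z, ∑ z, χ z • f z⟫_ℂ =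
      Fintype.card G * ∑ z, ⟪f z, f z⟫_ℂ := by
    simp_rw [sum_inner, inner_sum, inner_smul_left, inner_smul_right, ← mul_assoc,
      ← AddChar.map_neg_eq_conj, ← AddChar.map_add_eq_mul]
    rw [sum_comm, mul_sum]
    refine sum_congr rfl fun z _ => ?_
    rw [sum_comm]
    simp_rw [← sum_mul, AddChar.sum_apply_eq_ite, neg_add_eq_zero, ite_mul, zero_mul]
    simp
  simpa [Complex.re_sum, ← Complex.ofReal_pow] using congrArg Complex.re key

lemma sum_addChar_smul_add {G : Type*} [AddCommGroup G] [Fintype G] (χ : AddChar G ℂ)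
    (f : G → V) (s : G) : ∑ z, χ z • f (z + s) = χ (-s) • ∑ z, χ z • f z := by
  rw [smul_sum, ← Equiv.sum_comp (Equiv.subRight s)]
  refine sum_congr rfl fun z _ => ?_
  simp [smul_smul, sub_eq_add_neg, AddChar.map_add_eq_mul, mul_comm]

section TwistedShift

variable {ι : Type*} [Fintype ι]

def twistedShift (u : ι → ℂ) (hu : ∀ i, ‖u i‖ = 1) (σ : ι ≃ ι) :
    PiLp 2 (fun _ : ι => V) →ₗᵢ[ℂ] PiLp 2 (fun _ : ι => V) where
  toFun f := WithLp.toLp 2 fun i => u i • f (σ i)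
  map_add' f g := by ext i; simp [smul_add]
  map_smul' c f := by ext i; simp [smul_comm (u i) c]
  norm_map' f := by
    simp only [LinearMap.coe_mk, AddHom.coe_mk, PiLp.norm_eq_of_L2, norm_smul, hu, one_mul]
    rw [Equiv.sum_comp σ (fun i => ‖f i‖ ^ 2)]

@[simp] lemma twistedShift_apply (u : ι → ℂ) (hu : ∀ i, ‖u i‖ = 1) (σ : ι ≃ ι)
    (f : PiLp 2 (fun _ : ι => V)) (i : ι) : twistedShift u hu σ f i = u i • f (σ i) := rfl

end TwistedShift

end Fourier

section ShiftEnergy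

variable {α E : Type*} [NormedAddCommGroup E]

noncomputable def shiftEnergy (φ : α → E) (τ : α → α) : ℝ :=
  ∑ᶠ a, ‖φ (τ a) - φ a‖ ^ 2

lemma shiftEnergy_eq_sum [Fintype α] (φ : α → E) (τ : α → α) :
    shiftEnergy φ τ = ∑ a, ‖φ (τ a) - φ a‖ ^ 2 :=
  finsum_eq_sum_of_fintype _

lemma shiftEnergy_nonneg (φ : α → E) (τ : α → α) : 0 ≤ shiftEnergy φ τ :=
  finsum_nonneg fun _ => sq_nonneg _

end ShiftEnergy

section FiniteHeis

variable {R : Type*} [Ring R]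

/- Right multiplication by `a`, by `b` and by `c ^ n` in the Heisenberg group over `R`, in the
coordinates `((x, y), z)` of `Heis`. -/
def heisMulA (r : (R × R) × R) : (R × R) × R := ((r.1.1 + 1, r.1.2), r.2)
def heisMulB (r : (R × R) × R) : (R × R) × R := ((r.1.1, r.1.2 + 1), r.2 + r.1.1)
def heisMulC (n : ℕ) (r : (R × R) × R) : (R × R) × R := (r.1, r.2 + n)

lemma heisMulA_injective : Injective (heisMulA (R := R)) := by
  intro r r' h
  simpa [heisMulA, Prod.ext_iff] using h

lemma heisMulB_injective : Injective (heisMulB (R := R)) := by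
  intro r r' h
  simp only [heisMulB, Prod.ext_iff, add_left_inj] at h
  obtain ⟨⟨hx, hy⟩, hz⟩ := h
  rw [hx, add_left_inj] at hz
  exact Prod.ext (Prod.ext hx hy) hz

lemma heisMulC_injective (n : ℕ) : Injective (heisMulC (R := R) n) := by
  intro r r' h
  simpa [heisMulC, Prod.ext_iff] using h

variable [Fintype R] {V : Type*} [NormedAddCommGroup V] [InnerProductSpace ℂ V]

noncomputable def centralFourier (χ : AddChar R ℂ) (ψ : (R × R) × R → V) :
    PiLp 2 (fun _ : R × R => V) :=
  WithLp.toLp 2 fun p => ∑ z, χ z • ψ (p, z)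

lemma card_mul_shiftEnergy (ψ : (R × R) × R → V) (τ : (R × R) × R → (R × R) × R) :
    Fintype.card R * shiftEnergy ψ τ =
      ∑ χ : AddChar R ℂ, ‖centralFourier χ (fun r => ψ (τ r) - ψ r)‖ ^ 2 := by
  simp only [centralFourier, PiLp.norm_sq_eq_of_L2]
  rw [sum_comm, shiftEnergy_eq_sum, Fintype.sum_prod_type, mul_sum]
  exact sum_congr rfl fun p _ => (sum_norm_sq_sum_addChar_smul _).symm

lemma centralFourier_sub (χ : AddChar R ℂ) (ψ₁ ψ₂ : (R × R) × R → V) :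
    centralFourier χ (fun r => ψ₁ r - ψ₂ r) = centralFourier χ ψ₁ - centralFourier χ ψ₂ := by
  ext p; simp [centralFourier, smul_sub]

lemma centralFourier_comp_heisMulC (χ : AddChar R ℂ) (ψ : (R × R) × R → V) (n : ℕ) :
    centralFourier χ (fun r => ψ (heisMulC n r)) = χ (-1) ^ n • centralFourier χ ψ := by
  ext p
  simp only [centralFourier, heisMulC, PiLp.smul_apply]
  rw [sum_addChar_smul_add χ (fun z => ψ (p, z)), ← AddChar.map_nsmul_eq_pow, nsmul_eq_mul,
    mul_neg_one]

lemma centralFourier_comp_heisMulA (χ : AddChar R ℂ) (ψ : (R × R) × R → V) :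
    centralFourier χ (fun r => ψ (heisMulA r)) =
      twistedShift (fun _ => 1) (fun _ => norm_one) (Equiv.addRight (1, 0))
        (centralFourier χ ψ) := by
  ext ⟨x, y⟩
  simp [centralFourier, heisMulA]

lemma centralFourier_comp_heisMulB (χ : AddChar R ℂ) (ψ : (R × R) × R → V) :
    centralFourier χ (fun r => ψ (heisMulB r)) =
      twistedShift (fun p => χ (-p.1)) (fun _ => AddChar.norm_apply χ _) (Equiv.addRight (0, 1))
        (centralFourier χ ψ) := by
  ext ⟨x, y⟩
  simp only [centralFourier, heisMulB, twistedShift_apply, Equiv.coe_addRight]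
  rw [sum_addChar_smul_add χ (fun z => ψ ((x, y + 1), z))]
  simp

lemma twistedShift_comm (χ : AddChar R ℂ) (F : PiLp 2 (fun _ : R × R => V)) :
    twistedShift (fun _ => 1) (fun _ => norm_one) (Equiv.addRight (1, 0))
        (twistedShift (fun p => χ (-p.1)) (fun _ => AddChar.norm_apply χ _)
          (Equiv.addRight (0, 1)) F) =
      χ (-1) • twistedShift (fun p => χ (-p.1)) (fun _ => AddChar.norm_apply χ _)
          (Equiv.addRight (0, 1))
        (twistedShift (fun _ => 1) (fun _ => norm_one) (Equiv.addRight (1, 0)) F) := by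
  ext ⟨x, y⟩
  simp only [twistedShift_apply, Equiv.coe_addRight, Prod.mk_add_mk, PiLp.smul_apply, smul_smul,
    one_smul, one_mul, ← AddChar.map_add_eq_mul, add_zero, zero_add, neg_add, add_comm]

lemma centralFourier_poincare (χ : AddChar R ℂ) (ψ : (R × R) × R → V) (K : ℕ) :
    ∑ n ∈ range K, ‖centralFourier χ (fun r => ψ (heisMulC (n + 1) r) - ψ r)‖ ^ 2 /
        ((n : ℝ) + 1) ^ 2 ≤
      144 * (‖centralFourier χ (fun r => ψ (heisMulA r) - ψ r)‖ ^ 2 +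
        ‖centralFourier χ (fun r => ψ (heisMulB r) - ψ r)‖ ^ 2) := by
  set F := centralFourier χ ψ
  have hω : ‖χ (-1)‖ ≤ 1 := (AddChar.norm_apply χ _).le
  calc _ = (∑ n ∈ range K, ‖χ (-1) ^ (n + 1) - 1‖ ^ 2 / ((n : ℝ) + 1) ^ 2) * ‖F‖ ^ 2 := by
        rw [sum_mul]
        refine sum_congr rfl fun n _ => ?_
        have hsub : χ (-1) ^ (n + 1) • F - F = (χ (-1) ^ (n + 1) - 1) • F := by
          rw [sub_smul, one_smul]
        rw [centralFourier_sub, centralFourier_comp_heisMulC, hsub, norm_smul, mul_pow]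
        ring
    _ ≤ 9 * ‖χ (-1) - 1‖ * ‖F‖ ^ 2 := by
        gcongr; exact sum_norm_pow_sub_one_sq_div_le hω K
    _ ≤ 9 * (16 * (‖centralFourier χ (fun r => ψ (heisMulA r) - ψ r)‖ ^ 2 +
        ‖centralFourier χ (fun r => ψ (heisMulB r) - ψ r)‖ ^ 2)) := by
        rw [mul_assoc]
        refine mul_le_mul_of_nonneg_left ?_ (by norm_num)
        rw [centralFourier_sub, centralFourier_sub, centralFourier_comp_heisMulA,
          centralFourier_comp_heisMulB]
        exact norm_sub_one_mul_norm_sq_le _ _ _ F (twistedShift_comm χ F)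
    _ = _ := by ring

theorem finiteHeis_poincare (ψ : (R × R) × R → V) (K : ℕ) :
    ∑ n ∈ range K, shiftEnergy ψ (heisMulC (n + 1)) / ((n : ℝ) + 1) ^ 2 ≤
      144 * (shiftEnergy ψ heisMulA + shiftEnergy ψ heisMulB) := by
  have hcard : (0 : ℝ) < Fintype.card R := by exact_mod_cast Fintype.card_pos
  refine le_of_mul_le_mul_left ?_ hcard
  calc (Fintype.card R : ℝ) * ∑ n ∈ range K, shiftEnergy ψ (heisMulC (n + 1)) / ((n : ℝ) + 1) ^ 2
      = ∑ χ : AddChar R ℂ, ∑ n ∈ range K,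
          ‖centralFourier χ (fun r => ψ (heisMulC (n + 1) r) - ψ r)‖ ^ 2 / ((n : ℝ) + 1) ^ 2 := by
        simp_rw [mul_sum, ← mul_div_assoc, card_mul_shiftEnergy, sum_div]
        exact sum_comm
    _ ≤ ∑ χ : AddChar R ℂ, 144 * (‖centralFourier χ (fun r => ψ (heisMulA r) - ψ r)‖ ^ 2 +
          ‖centralFourier χ (fun r => ψ (heisMulB r) - ψ r)‖ ^ 2) :=
        sum_le_sum fun χ _ => centralFourier_poincare χ ψ K
    _ = _ := by
        rw [← mul_sum, sum_add_distrib, ← card_mul_shiftEnergy, ← card_mul_shiftEnergy]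
        ring

lemma exists_complex_congruent_copy {T H : Type*} [Finite T] [NormedAddCommGroup H]
    [InnerProductSpace ℝ H] (f : T → H) :
    ∃ (d : ℕ) (g : T → EuclideanSpace ℂ (Fin d)), ∀ t t', ‖g t - g t'‖ = ‖f t - f t'‖ := by
  set W := Submodule.span ℝ (Set.range f)
  have : FiniteDimensional ℝ W := FiniteDimensional.span_of_finite ℝ (Set.finite_range f)
  set b := stdOrthonormalBasis ℝ W
  let w : T → W := fun t => ⟨f t, Submodule.subset_span (Set.mem_range_self t)⟩
  refine ⟨_, fun t => WithLp.toLp 2 fun i => (b.repr (w t) i : ℂ), fun t t' => ?_⟩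
  have h : ‖f t - f t'‖ = ‖b.repr (w t) - b.repr (w t')‖ := by
    rw [← map_sub, b.repr.norm_map]; rfl
  rw [h, EuclideanSpace.norm_eq, EuclideanSpace.norm_eq]
  simp [← Complex.ofReal_sub]

theorem finiteHeis_poincare_real {H : Type*} [NormedAddCommGroup H] [InnerProductSpace ℝ H]
    (ψ : (R × R) × R → H) (K : ℕ) :
    ∑ n ∈ range K, shiftEnergy ψ (heisMulC (n + 1)) / ((n : ℝ) + 1) ^ 2 ≤
      144 * (shiftEnergy ψ heisMulA + shiftEnergy ψ heisMulB) := by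
  obtain ⟨d, g, hg⟩ := exists_complex_congruent_copy ψ
  have h : ∀ τ, shiftEnergy g τ = shiftEnergy ψ τ := fun τ => by
    simp only [shiftEnergy, hg]
  simpa only [h] using finiteHeis_poincare g K

end FiniteHeis

section Periodize

variable {α β E : Type*}

noncomputable def periodize [AddCommMonoid E] (π : α → β) (φ : α → E) (b : β) : E :=
  ∑ᶠ a ∈ π ⁻¹' {b}, φ a

lemma periodize_eq_sum_filter [AddCommMonoid E] [DecidableEq β] {π : α → β} {φ : α → E}
    {S : Finset α} (hS : support φ ⊆ S) (b : β) :
    periodize π φ b = ∑ a ∈ S with π a = b, φ a := by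
  refine finsum_mem_eq_sum_of_inter_support_eq _ ?_
  ext a
  simp only [Set.mem_inter_iff, Set.mem_preimage, Set.mem_singleton_iff, coe_filter,
    Set.mem_ofPred_eq, mem_support]
  exact ⟨fun h => ⟨⟨hS h.2, h.1⟩, h.2⟩, fun h => ⟨h.1.2, h.2⟩⟩

lemma periodize_sub [AddCommGroup E] (π : α → β) {f g : α → E} (hf : HasFiniteSupport f)
    (hg : HasFiniteSupport g) (b : β) :
    periodize π (fun a => f a - g a) b = periodize π f b - periodize π g b := by
  classical
  set S := hf.toFinset ∪ hg.toFinset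
  have hfS : support f ⊆ S := fun a ha => mem_union_left _ (hf.mem_toFinset.2 ha)
  have hgS : support g ⊆ S := fun a ha => mem_union_right _ (hg.mem_toFinset.2 ha)
  rw [periodize_eq_sum_filter ((support_sub f g).trans (Set.union_subset hfS hgS)),
    periodize_eq_sum_filter hfS, periodize_eq_sum_filter hgS, sum_sub_distrib]

lemma periodize_comp [AddCommMonoid E] {π : α → β} (τ : α ≃ α) {τ' : β → β}
    (hτ' : Injective τ') (hπ : ∀ a, π (τ a) = τ' (π a)) (φ : α → E) (b : β) :
    periodize π (fun a => φ (τ a)) b = periodize π φ (τ' b) := by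
  refine finsum_mem_eq_of_bijOn τ ⟨fun a ha => ?_, τ.injective.injOn, fun a ha => ?_⟩
    fun _ _ => rfl
  · simp only [Set.mem_preimage, Set.mem_singleton_iff] at ha ⊢
    rw [hπ, ha]
  · refine ⟨τ.symm a, hτ' ?_, τ.apply_symm_apply a⟩
    simp only [Set.mem_preimage, Set.mem_singleton_iff] at ha ⊢
    rw [← hπ, τ.apply_symm_apply, ha]

lemma sum_norm_sq_periodize [Fintype β] [NormedAddCommGroup E] {π : α → β} {φ : α → E}
    (hφ : HasFiniteSupport φ) (hinj : Set.InjOn π (support φ)) :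
    ∑ b, ‖periodize π φ b‖ ^ 2 = ∑ᶠ a, ‖φ a‖ ^ 2 := by
  classical
  set S := hφ.toFinset
  have hS : support φ ⊆ S := fun a ha => hφ.mem_toFinset.2 ha
  have hfiber : ∀ b, ‖∑ a ∈ S with π a = b, φ a‖ ^ 2 = ∑ a ∈ S with π a = b, ‖φ a‖ ^ 2 := by
    intro b
    rcases (S.filter (π · = b)).eq_empty_or_nonempty with h | ⟨a, ha⟩
    · simp [h]
    · have : S.filter (π · = b) = {a} := by
        refine eq_singleton_iff_unique_mem.2 ⟨ha, fun a' ha' => ?_⟩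
        rw [mem_filter] at ha ha'
        exact hinj (hφ.mem_toFinset.1 ha'.1) (hφ.mem_toFinset.1 ha.1) (ha'.2.trans ha.2.symm)
      simp [this]
  rw [finsum_eq_sum_of_support_subset _ (s := S) (by simpa using hS), ← sum_fiberwise S π]
  simp_rw [periodize_eq_sum_filter hS, hfiber]

lemma Function.HasFiniteSupport.comp_sub_self [AddGroup E] {φ : α → E}
    (hφ : HasFiniteSupport φ) {τ : α → α} (hτ : Injective τ) :
    HasFiniteSupport fun a => φ (τ a) - φ a :=
  (hφ.fun_comp_of_injective hτ).fun_sub hφ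

theorem shiftEnergy_periodize [Fintype β] [NormedAddCommGroup E] {π : α → β} {φ : α → E}
    (τ : α ≃ α) {τ' : β → β} (hτ' : Injective τ') (hπ : ∀ a, π (τ a) = τ' (π a))
    (hφ : HasFiniteSupport φ) (hinj : Set.InjOn π (support fun a => φ (τ a) - φ a)) :
    shiftEnergy (periodize π φ) τ' = shiftEnergy φ τ := by
  rw [shiftEnergy_eq_sum, shiftEnergy,
    ← sum_norm_sq_periodize (hφ.comp_sub_self τ.injective) hinj]
  simp_rw [periodize_sub π (hφ.fun_comp_of_injective τ.injective) hφ, periodize_comp τ hτ' hπ]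

end Periodize

namespace Heis

lemma C_pow (n : ℕ) : C ^ n = ⟨0, 0, n⟩ := by
  induction n with
  | zero => rfl
  | succ n ih =>
    rw [pow_succ, ih]
    ext <;> simp [C, A, B]

def reduceMod (N : ℕ) (g : Heis) : (ZMod N × ZMod N) × ZMod N := ((g.x, g.y), g.z)

lemma reduceMod_mul_A (N : ℕ) (g : Heis) : reduceMod N (g * A) = heisMulA (reduceMod N g) := by
  simp [reduceMod, heisMulA, A]

lemma reduceMod_mul_B (N : ℕ) (g : Heis) : reduceMod N (g * B) = heisMulB (reduceMod N g) := by
  simp [reduceMod, heisMulB, B]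

lemma reduceMod_mul_C_pow (N n : ℕ) (g : Heis) :
    reduceMod N (g * C ^ n) = heisMulC n (reduceMod N g) := by
  simp [reduceMod, heisMulC, C_pow]

def box (L : ℕ) : Set Heis := {g | g.x.natAbs ≤ L ∧ g.y.natAbs ≤ L ∧ g.z.natAbs ≤ L}

lemma exists_support_subset_box {E : Type*} [Zero E] {φ : Heis → E} (hφ : HasFiniteSupport φ) :
    ∃ M, support φ ⊆ box M := by
  obtain ⟨M, hM⟩ := (hφ.image fun g => max g.x.natAbs (max g.y.natAbs g.z.natAbs)).bddAbove
  refine ⟨M, fun g hg => ?_⟩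
  have := hM ⟨g, hg, rfl⟩
  simp only [box, Set.mem_ofPred_eq, sup_le_iff] at this ⊢
  exact ⟨this.1, this.2.1, this.2.2⟩

lemma box_mono {L L' : ℕ} (h : L ≤ L') : box L ⊆ box L' := fun g hg => by
  simp only [box, Set.mem_ofPred_eq] at hg ⊢
  omega

lemma mem_box_of_mul_mem_box {g t : Heis} {M K : ℕ} (hg : g * t ∈ box M)
    (ht : t.x.natAbs ≤ 1 ∧ t.y.natAbs ≤ 1 ∧ t.z.natAbs ≤ K) : g ∈ box (2 * M + K + 1) := by
  have hxy : (g.x * t.y).natAbs ≤ g.x.natAbs := by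
    rw [Int.natAbs_mul]; exact (Nat.mul_le_mul_left _ ht.2.1).trans_eq (mul_one _)
  simp only [box, Set.mem_ofPred_eq, mul_def] at hg ⊢
  omega

lemma injOn_reduceMod {N L : ℕ} (hL : 2 * L < N) : Set.InjOn (reduceMod N) (box L) := by
  have hcoord : ∀ a b : ℤ, a.natAbs ≤ L → b.natAbs ≤ L → (a : ZMod N) = b → a = b := by
    intro a b ha hb h
    rw [ZMod.intCast_eq_intCast_iff_dvd_sub] at h
    have := Int.eq_zero_of_abs_lt_dvd h (abs_lt.2 ⟨by omega, by omega⟩)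
    omega
  intro g hg g' hg' h
  simp only [reduceMod, Prod.ext_iff] at h
  exact Heis.ext (hcoord _ _ hg.1 hg'.1 h.1.1) (hcoord _ _ hg.2.1 hg'.2.1 h.1.2)
    (hcoord _ _ hg.2.2 hg'.2.2 h.2)

lemma shiftEnergy_mul_eq_periodize {E : Type*} [NormedAddCommGroup E] {φ : Heis → E}
    (hφ : HasFiniteSupport φ) {M K N : ℕ} (hM : support φ ⊆ box M)
    (hN : 2 * (2 * M + K + 1) < N) {t : Heis}
    (ht : t.x.natAbs ≤ 1 ∧ t.y.natAbs ≤ 1 ∧ t.z.natAbs ≤ K)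
    {τ : (ZMod N × ZMod N) × ZMod N → (ZMod N × ZMod N) × ZMod N} (hτ : Injective τ)
    (hπ : ∀ g, reduceMod N (g * t) = τ (reduceMod N g)) :
    shiftEnergy φ (· * t) = shiftEnergy (periodize (reduceMod N) φ) τ := by
  have : NeZero N := ⟨by omega⟩
  refine (shiftEnergy_periodize (Equiv.mulRight t) hτ hπ hφ
    ((injOn_reduceMod hN).mono fun g hg => ?_)).symm
  by_cases h : φ g = 0
  · have : φ (g * t) ≠ 0 := by simpa [h] using hg
    exact mem_box_of_mul_mem_box (hM this) ht
  · exact box_mono (by omega) (hM h)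

theorem poincare_partial_sum {H : Type*} [NormedAddCommGroup H] [InnerProductSpace ℝ H]
    {φ : Heis → H} (hφ : HasFiniteSupport φ) (K : ℕ) :
    ∑ n ∈ range K, shiftEnergy φ (· * C ^ (n + 1)) / ((n : ℝ) + 1) ^ 2 ≤
      144 * (shiftEnergy φ (· * A) + shiftEnergy φ (· * B)) := by
  obtain ⟨M, hM⟩ := exists_support_subset_box hφ
  have hN : 2 * (2 * M + K + 1) < 2 * (2 * M + K + 1) + 1 := by omega
  rw [shiftEnergy_mul_eq_periodize hφ hM hN (by simp [A]) heisMulA_injective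
      (reduceMod_mul_A _),
    shiftEnergy_mul_eq_periodize hφ hM hN (by simp [B]) heisMulB_injective (reduceMod_mul_B _)]
  calc _ = ∑ n ∈ range K, shiftEnergy (periodize (reduceMod _) φ) (heisMulC (n + 1)) /
        ((n : ℝ) + 1) ^ 2 := by
        refine sum_congr rfl fun n hn => ?_
        rw [shiftEnergy_mul_eq_periodize hφ hM hN (by simp [C_pow]; exact mem_range.1 hn)
          (heisMulC_injective _) (reduceMod_mul_C_pow _ _)]
    _ ≤ _ := finiteHeis_poincare_real _ K

end Heis

lemma tsum_ofReal_norm_sq_sub_eq {α E : Type*} [NormedAddCommGroup E] {φ : α → E}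
    (hφ : HasFiniteSupport φ) {τ : α → α} (hτ : Injective τ) :
    ∑' a, ENNReal.ofReal (‖φ (τ a) - φ a‖ ^ 2) = ENNReal.ofReal (shiftEnergy φ τ) := by
  have hfin : HasFiniteSupport fun a => ‖φ (τ a) - φ a‖ ^ 2 :=
    (hφ.comp_sub_self hτ).subset fun a => by simp
  rw [shiftEnergy, ← tsum_eq_finsum (L := SummationFilter.unconditional α) hfin,
    ENNReal.ofReal_tsum_of_nonneg (fun _ => sq_nonneg _) (summable_of_hasFiniteSupport hfin)]

/-- **Poincaré inequality for finitely supported functions (eq. 6.3).** There is a universal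
`C > 0` such that for every finitely supported `φ : ℍ → H` into a Hilbert space,
`∑_{x ∈ ℍ} ∑_{k=1}^∞ ‖φ(xc^k) − φ(x)‖²/k²
  ≤ C·∑_{x ∈ ℍ} (‖φ(xa) − φ(x)‖² + ‖φ(xb) − φ(x)‖²)`. -/
theorem heisenberg_finitely_supported_poincare :
    ∃ C : ℝ, 0 < C ∧
      ∀ (H : Type*) [NormedAddCommGroup H] [InnerProductSpace ℝ H] [CompleteSpace H],
        ∀ φ : Heis → H, (Function.support φ).Finite →
          (∑' (g : Heis) (k : ℕ),
              ENNReal.ofReal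
                (‖φ (g * Heis.C ^ (k + 1)) - φ g‖ ^ 2 / ((k : ℝ) + 1) ^ 2)) ≤
            ENNReal.ofReal C *
              ∑' g : Heis,
                ENNReal.ofReal
                  (‖φ (g * Heis.A) - φ g‖ ^ 2 + ‖φ (g * Heis.B) - φ g‖ ^ 2) := by
  refine ⟨144, by norm_num, fun H _ _ _ φ hφ => ?_⟩
  have hk : ∀ k : ℕ, (0 : ℝ) < ((k : ℝ) + 1) ^ 2 := fun k => by positivity
  have hRHS : ∑' g, ENNReal.ofReal (‖φ (g * Heis.A) - φ g‖ ^ 2 + ‖φ (g * Heis.B) - φ g‖ ^ 2) =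
      ENNReal.ofReal (shiftEnergy φ (· * Heis.A) + shiftEnergy φ (· * Heis.B)) := by
    simp_rw [ENNReal.ofReal_add (sq_nonneg _) (sq_nonneg _),
      ENNReal.ofReal_add (shiftEnergy_nonneg _ _) (shiftEnergy_nonneg _ _)]
    rw [ENNReal.tsum_add, tsum_ofReal_norm_sq_sub_eq hφ (mul_left_injective _),
      tsum_ofReal_norm_sq_sub_eq hφ (mul_left_injective _)]
  have hLHS : ∀ k : ℕ, ∑' g, ENNReal.ofReal
      (‖φ (g * Heis.C ^ (k + 1)) - φ g‖ ^ 2 / ((k : ℝ) + 1) ^ 2) =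
      ENNReal.ofReal (shiftEnergy φ (· * Heis.C ^ (k + 1)) / ((k : ℝ) + 1) ^ 2) := fun k => by
    simp_rw [ENNReal.ofReal_div_of_pos (hk k), div_eq_mul_inv]
    rw [ENNReal.tsum_mul_right, tsum_ofReal_norm_sq_sub_eq hφ (mul_left_injective _)]
  rw [ENNReal.tsum_comm, tsum_congr hLHS, hRHS, ENNReal.tsum_eq_iSup_nat,
    ← ENNReal.ofReal_mul (by norm_num)]
  refine iSup_le fun K => ?_
  rw [← ENNReal.ofReal_sum_of_nonneg fun k _ => div_nonneg (shiftEnergy_nonneg _ _) (hk k).le]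
  exact ENNReal.ofReal_le_ofReal (Heis.poincare_partial_sum hφ K)
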